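/- arXiv:1806.03458 — 2 statements merged into one kernel-verified Lean document; each statement's English description precedes it below -/
import Mathlib

section
/- The real hypersurface S ⊂ ℂ³ given by Im(w) = 2 Re(z₁ w² z̄₂) is invariant under the flows of the holomorphic vector fields Re(3z₁∂_{z₁} - z₂∂_{z₂} - 2w∂_w) and Re(i z₁ w² ∂_{z₂}). -/
/-!
Write `ρ(z₁, z₂, w) = Im w - 2 Re(z₁ w² z̄₂)` (`hypersurfaceFn`). The flow of `Re(3z₁∂_{z₁} - z₂∂_{z₂} - 2w∂_w)` is
`(z₁, z₂, w) ↦ (e^{3t}z₁, e^{-t}z₂, e^{-2t}w)` and that of `Re(i z₁ w² ∂_{z₂})` is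
`(z₁, z₂, w) ↦ (z₁, z₂ + t·i z₁ w², w)`. Since the weights satisfy `3 - 2·2 - 1 = -2`, `ρ` is
weighted homogeneous and the first flow multiplies it by `e^{-2t}`. Along the second flow `ρ` changes
by `-2 Re(z₁ w² · conj(t i z₁ w²)) = -2 Re(-t i |z₁ w²|²) = 0`.
-/

open Complex ComplexConjugate

noncomputable def hypersurfaceFn (z₁ z₂ w : ℂ) : ℝ :=
  w.im - 2 * (z₁ * w ^ 2 * conj z₂).re

theorem hypersurfaceFn_ofReal_mul (a b c : ℝ) (habc : a * c ^ 2 * b = c) (z₁ z₂ w : ℂ) :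
    hypersurfaceFn (a * z₁) (b * z₂) (c * w) = c * hypersurfaceFn z₁ z₂ w := by
  have hprod :=
    calc (a * z₁) * (c * w) ^ 2 * conj (b * z₂)
        = ((a * c ^ 2 * b : ℝ) : ℂ) * (z₁ * w ^ 2 * conj z₂) := by
          rw [map_mul, conj_ofReal]; push_cast; ring
      _ = c * (z₁ * w ^ 2 * conj z₂) := by rw [habc]
  simp only [hypersurfaceFn, hprod, re_ofReal_mul, im_ofReal_mul]
  ring

theorem re_mul_conj_ofReal_mul_I_mul_self (t : ℝ) (a : ℂ) : (a * conj (t * I * a)).re = 0 := by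
  have h : a * conj (t * I * a) = ((-(t * normSq a) : ℝ) : ℂ) * I := by
    rw [map_mul, map_mul, conj_ofReal, conj_I, mul_comm, mul_assoc, conj_mul', ← ofReal_pow,
      ← normSq_eq_norm_sq]
    push_cast
    ring
  rw [h, re_ofReal_mul, I_re, mul_zero]

theorem hypersurfaceFn_add_ofReal_mul_I_mul (t : ℝ) (z₁ z₂ w : ℂ) :
    hypersurfaceFn z₁ (z₂ + t * I * z₁ * w ^ 2) w = hypersurfaceFn z₁ z₂ w := by
  have h := re_mul_conj_ofReal_mul_I_mul_self t (z₁ * w ^ 2)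
  rw [← mul_assoc] at h
  simp only [hypersurfaceFn, map_add, mul_add, add_re, h, add_zero]

/-- The real hypersurface `Im w = 2 Re(z₁ w² z̄₂)` in `ℂ³` is invariant under the flows of
the real vector fields `Re(3z₁∂_{z₁} - z₂∂_{z₂} - 2w∂_w)` (whose flow is
`(z₁,z₂,w) ↦ (e^{3t}z₁, e^{-t}z₂, e^{-2t}w)`) and `Re(i z₁ w² ∂_{z₂})` (whose flow is
`(z₁,z₂,w) ↦ (z₁, z₂ + t·i z₁ w², w)`). -/
theorem stmt11 (z₁ z₂ w : ℂ)
    (h : w.im = 2 * (z₁ * w^2 * (starRingEnd ℂ) z₂).re) (t : ℝ) :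
    ((Complex.exp (-2*(t:ℂ)) * w).im =
      2 * ((Complex.exp (3*(t:ℂ)) * z₁) * (Complex.exp (-2*(t:ℂ)) * w)^2 *
        (starRingEnd ℂ) (Complex.exp (-(t:ℂ)) * z₂)).re) ∧
    (w.im = 2 * (z₁ * w^2 * (starRingEnd ℂ) (z₂ + (t:ℂ) * Complex.I * z₁ * w^2)).re) := by
  have hρ : hypersurfaceFn z₁ z₂ w = 0 := sub_eq_zero.mpr h
  have hweights : Real.exp (3 * t) * Real.exp (-2 * t) ^ 2 * Real.exp (-t) = Real.exp (-2 * t) := by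
    rw [sq, ← Real.exp_add, ← Real.exp_add, ← Real.exp_add]
    ring_nf
  have hscale := hypersurfaceFn_ofReal_mul _ _ _ hweights z₁ z₂ w
  push_cast at hscale
  refine ⟨sub_eq_zero.mp ?_, sub_eq_zero.mp ?_⟩
  · rw [← hypersurfaceFn, hscale, hρ, mul_zero]
  · rw [← hypersurfaceFn, hypersurfaceFn_add_ofReal_mul_I_mul, hρ]
end

section
/- On the set where Re(w₀^{2m}) ≠ 0 and σ = ε·sgn(Re(w₀^{2m})), the map (z,w) ↦ (z w^m, σ w^{2m}) sends points satisfying Im(w^{2m})√(1-‖z‖⁴) = ε Re(w^{2m})‖z‖² with ‖z‖ < 1 into the hyperquadric {(Z,W) : Im(W) = ‖Z‖²}. -/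
open Complex

/-! With `W = w^{2m}` and `t = Σⱼ sgnⱼ |zⱼ|²`, the target reads `ε sgn(Re W) Im W = |W| t`.
Multiplying the hypothesis by `ε sgn(Re W)` turns it into `c √(1 - t²) = |Re W| t` for
`c = ε sgn(Re W) Im W`; squaring gives `c² = (|Re W|² + c²) t² = |W|² t²`, and since
`|Re W| > 0` the same equation shows that `c` has the sign of `t`, which picks the root. -/

theorem eq_sqrt_sq_add_sq_mul_of_mul_sqrt_eq {a c t : ℝ} (ha : 0 < a) (ht : t ^ 2 < 1)
    (h : c * √(1 - t ^ 2) = a * t) : c = √(a ^ 2 + c ^ 2) * t := by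
  set s := √(1 - t ^ 2)
  set r := √(a ^ 2 + c ^ 2)
  have hs : s ^ 2 = 1 - t ^ 2 := Real.sq_sqrt (by linarith)
  have hs0 : 0 < s := Real.sqrt_pos.mpr (by linarith)
  have hr : r ^ 2 = a ^ 2 + c ^ 2 := Real.sq_sqrt (by positivity)
  have hsq : c ^ 2 = (r * t) ^ 2 := by
    linear_combination (c * s + a * t) * h - c ^ 2 * hs - t ^ 2 * hr
  have hct : 0 ≤ c * t := by
    have : 0 ≤ c * t * s := by nlinarith [sq_nonneg t]
    exact nonneg_of_mul_nonneg_left this hs0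
  rcases sq_eq_sq_iff_eq_or_eq_neg.mp hsq with hc | hc
  · exact hc
  · have hrt : r * t = 0 := by nlinarith [Real.sqrt_nonneg (a ^ 2 + c ^ 2)]
    linarith

theorem im_ofReal_sign_mul_eq_norm_mul {W : ℂ} {ε t : ℝ} (hε : ε = 1 ∨ ε = -1)
    (hre : W.re ≠ 0) (ht : t ^ 2 < 1) (h : W.im * √(1 - t ^ 2) = ε * W.re * t) :
    (((ε * Real.sign W.re : ℝ) : ℂ) * W).im = ‖W‖ * t := by
  have hε2 : ε ^ 2 = 1 := by rcases hε with rfl | rfl <;> norm_num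
  have hsign2 : Real.sign W.re ^ 2 = 1 := by
    rcases Real.sign_apply_eq_of_ne_zero _ hre with h | h <;> simp [h]
  have key := eq_sqrt_sq_add_sq_mul_of_mul_sqrt_eq (c := ε * Real.sign W.re * W.im)
    (Real.sign_mul_pos_of_ne_zero _ hre) ht
    (by linear_combination ε * Real.sign W.re * h + Real.sign W.re * W.re * t * hε2)
  rw [im_ofReal_mul, key, norm_eq_sqrt_sq_add_sq]
  congr 2
  linear_combination (W.re ^ 2 + W.im ^ 2 * ε ^ 2) * hsign2 + W.im ^ 2 * hε2

theorem sum_mul_norm_mul_sq {ι : Type*} (s : Finset ι) (c : ι → ℝ) (z : ι → ℂ) (u : ℂ) :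
    ∑ j ∈ s, c j * ‖z j * u‖ ^ 2 = ‖u‖ ^ 2 * ∑ j ∈ s, c j * ‖z j‖ ^ 2 := by
  rw [Finset.mul_sum]
  refine Finset.sum_congr rfl fun j _ => ?_
  rw [norm_mul]
  ring

theorem stmt14_general (n : ℕ) (m : ℕ) (ε : ℝ) (hε : ε = 1 ∨ ε = -1)
    (sgn : Fin n → ℝ) (z : Fin n → ℂ) (w : ℂ)
    (ht1 : -1 < ∑ j, sgn j * ‖z j‖^2)
    (ht2 : ∑ j, sgn j * ‖z j‖^2 < 1)
    (hre : (w^(2*m)).re ≠ 0)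
    (σ : ℝ) (hσ : σ = ε * Real.sign ((w^(2*m)).re))
    (h : (w^(2*m)).im * Real.sqrt (1 - (∑ j, sgn j * ‖z j‖^2)^2)
      = ε * (w^(2*m)).re * (∑ j, sgn j * ‖z j‖^2)) :
    ((σ:ℂ) * w^(2*m)).im = ∑ j, sgn j * ‖z j * w^m‖^2 := by
  have ht : (∑ j, sgn j * ‖z j‖ ^ 2) ^ 2 < 1 := by nlinarith
  rw [hσ, im_ofReal_sign_mul_eq_norm_mul hε hre ht h, sum_mul_norm_mul_sq, ← norm_pow,
    ← pow_mul, mul_comm m 2]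

/-- If `Re(w^{2m}) ≠ 0` and `σ = ε·sgn(Re(w^{2m}))`, the map `(z,w) ↦ (z w^m, σ w^{2m})`
sends points satisfying `Im(w^{2m})√(1-‖z‖⁴) = ε Re(w^{2m})‖z‖²` with `|‖z‖²| < 1` into the
hyperquadric `{(Z,W) : Im W = ‖Z‖²}`, where `‖z‖² = Σⱼ σⱼ|zⱼ|²`. -/
theorem stmt14 (n : ℕ) (m : ℕ) (hm : 1 ≤ m) (ε : ℝ) (hε : ε = 1 ∨ ε = -1)
    (sgn : Fin n → ℝ) (hsgn : ∀ j, sgn j = 1 ∨ sgn j = -1) (z : Fin n → ℂ) (w : ℂ)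
    (ht1 : -1 < ∑ j, sgn j * ‖z j‖^2)
    (ht2 : ∑ j, sgn j * ‖z j‖^2 < 1)
    (hre : (w^(2*m)).re ≠ 0)
    (σ : ℝ) (hσ : σ = ε * Real.sign ((w^(2*m)).re))
    (h : (w^(2*m)).im * Real.sqrt (1 - (∑ j, sgn j * ‖z j‖^2)^2)
      = ε * (w^(2*m)).re * (∑ j, sgn j * ‖z j‖^2)) :
    ((σ:ℂ) * w^(2*m)).im = ∑ j, sgn j * ‖z j * w^m‖^2 :=
  stmt14_general n m ε hε sgn z w ht1 ht2 hre σ hσ h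
end
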